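/- arXiv:1309.4387 — 3 statements merged into one kernel-verified Lean document; each statement's English description precedes it below -/
import Mathlib

section
/- Let (X_n)_{n≥0} be a transient discrete-time random walk on ℤᵈ with i.i.d. steps, and let γ = P[X_n ≠ X_0 for all n ≥ 1] > 0 be the escape probability. Let R_n = |{X_0, X_1, …, X_n}| be the number of distinct sites visited in the first n steps. Then R_n / n → γ in L¹ as n → ∞. -/
/-!
Count every visited site at the time of its last visit up to `n`: then `R n` is the number of
times `i ≤ n` after which the walk does not return before time `n`. It is therefore at least the
number `S n` of times `i ≤ n` with no return within `n` steps and at most `m` plus the number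
`S m` of times `i ≤ n` with no return within `m` steps. If `q k` is the probability of no return
within `k` steps, then `E S k = (n + 1) q k` by stationarity of the increments, and `q k`
decreases to `γ`. The indicators counted by `S m` are independent at distance `m`, since they
depend on disjoint blocks of increments, so `Var (S m) = O(m n)`. Hence
`E |R n / n - γ| ≤ 3 (q m - γ) + O(√(m / n) + m / n)`; let `n → ∞`, then `m → ∞`.
-/

open MeasureTheory ProbabilityTheory Filter Finset

section NoReturn

variable {α : Type*} (f : ℕ → α)

def NoReturn (i m : ℕ) : Prop :=
  ∀ j, 0 < j → j ≤ m → f (i + j) ≠ f i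

variable {f}

theorem NoReturn.mono {i m m' : ℕ} (h : NoReturn f i m') (hm : m ≤ m') : NoReturn f i m :=
  fun j hj hjm => h j hj (hjm.trans hm)

theorem noReturn_iff_noReturn_partialSum {G : Type*} [AddCommGroup G] {f : ℕ → G} {i m : ℕ} :
    NoReturn f i m ↔ NoReturn (fun j => ∑ k ∈ range j, (f (i + k + 1) - f (i + k))) 0 m := by
  refine forall₃_congr fun j _ _ => ?_
  have htel := sum_range_sub (fun k => f (i + k)) j
  simp only [add_zero, ← add_assoc] at htel
  simp only [zero_add, sum_range_zero, htel, Ne, sub_eq_zero]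

open Classical in
/-- Each visited site is counted once, at the time of its last visit before `n`. -/
theorem card_image_range_eq_card_filter_noReturn [DecidableEq α] (n : ℕ) :
    #((range (n + 1)).image f) = #{i ∈ range (n + 1) | NoReturn f i (n - i)} := by
  symm
  refine card_nbij f (fun i hi => mem_image_of_mem f (mem_filter.1 hi).1) ?_ ?_
  · intro a ha b hb hab
    simp only [coe_filter, mem_range, Set.mem_ofPred_eq] at ha hb
    by_contra hne
    rcases Nat.lt_or_gt_of_ne hne with h | h
    · exact ha.2 (b - a) (by omega) (by omega) (by rw [Nat.add_sub_cancel' h.le, hab])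
    · exact hb.2 (a - b) (by omega) (by omega) (by rw [Nat.add_sub_cancel' h.le, hab])
  · rintro _ hv
    obtain ⟨i, hi, rfl⟩ := mem_image.1 (mem_coe.1 hv)
    set s := {j ∈ range (n + 1) | f j = f i}
    have hne : s.Nonempty := ⟨i, mem_filter.2 ⟨hi, rfl⟩⟩
    obtain ⟨hlast, hflast⟩ := mem_filter.1 (max'_mem s hne)
    refine ⟨_, mem_filter.2 ⟨hlast, fun j hj hjn heq => ?_⟩, hflast⟩
    have hlater : s.max' hne + j ∈ s :=
      mem_filter.2 ⟨mem_range.2 (by rw [mem_range] at hlast; omega), heq.trans hflast⟩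
    have := le_max' s _ hlater
    omega

open Classical in
theorem card_filter_noReturn_le_card_image_range [DecidableEq α] (n : ℕ) :
    #{i ∈ range (n + 1) | NoReturn f i n} ≤ #((range (n + 1)).image f) := by
  rw [card_image_range_eq_card_filter_noReturn]
  exact card_le_card (monotone_filter_right _ fun i _ h => h.mono (Nat.sub_le n i))

open Classical in
theorem card_image_range_le_card_filter_noReturn_add [DecidableEq α] (n m : ℕ) :
    #((range (n + 1)).image f) ≤ #{i ∈ range (n + 1) | NoReturn f i m} + m := by
  have hsub : {i ∈ range (n + 1) | NoReturn f i (n - i)}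
      ⊆ {i ∈ range (n + 1) | NoReturn f i m} ∪ Ico (n + 1 - m) (n + 1) := by
    intro i hi
    obtain ⟨hi, hnr⟩ := mem_filter.1 hi
    rw [mem_union, mem_filter, mem_Ico]
    by_cases him : i + m ≤ n
    · exact .inl ⟨hi, hnr.mono (by omega)⟩
    · exact .inr (by rw [mem_range] at hi; omega)
  calc #((range (n + 1)).image f) ≤ _ + #(Ico (n + 1 - m) (n + 1)) := by
        rw [card_image_range_eq_card_filter_noReturn]
        exact (card_le_card hsub).trans (card_union_le _ _)
    _ ≤ _ := by rw [Nat.card_Ico]; omega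

end NoReturn

section Concentration

variable {Ω : Type*} [MeasurableSpace Ω] {P : Measure Ω} [IsProbabilityMeasure P]

theorem integral_abs_sub_integral_le_sqrt_variance {Z : Ω → ℝ} (hZ : MemLp Z 2 P) :
    ∫ ω, |Z ω - P[Z]| ∂P ≤ √Var[Z; P] := by
  have hdev : MemLp (fun ω => |Z ω - P[Z]|) 2 P := (hZ.sub (memLp_const _)).abs
  have hsq : P[(fun ω => |Z ω - P[Z]|) ^ 2] = Var[Z; P] := by
    rw [variance_eq_integral hZ.aemeasurable]
    simp only [Pi.pow_apply, sq_abs]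
  have := variance_nonneg (fun ω => |Z ω - P[Z]|) P
  rw [variance_eq_sub hdev, hsq] at this
  exact Real.le_sqrt_of_sq_le (by linarith)

theorem covariance_le_one {Y₁ Y₂ : Ω → ℝ} (h₁ : ∀ ω, Y₁ ω ∈ Set.Icc 0 1)
    (h₂ : ∀ ω, Y₂ ω ∈ Set.Icc 0 1) : cov[Y₁, Y₂; P] ≤ 1 := by
  have hmean : ∀ {Y : Ω → ℝ}, (∀ ω, Y ω ∈ Set.Icc 0 1) → ∀ ω, |Y ω - P[Y]| ≤ 1 := by
    intro Y hY ω
    have h0 : 0 ≤ P[Y] := integral_nonneg fun ω => (hY ω).1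
    have h1 : P[Y] ≤ 1 := by
      simpa using integral_mono_of_nonneg (.of_forall fun ω => (hY ω).1)
        (integrable_const (μ := P) 1) (.of_forall fun ω => (hY ω).2)
    rw [abs_le]
    constructor <;> linarith [(hY ω).1, (hY ω).2]
  calc cov[Y₁, Y₂; P] ≤ ‖cov[Y₁, Y₂; P]‖ := Real.le_norm_self _
    _ ≤ 1 * P.real Set.univ := norm_integral_le_of_norm_le_const (.of_forall fun ω => by
        rw [norm_mul, Real.norm_eq_abs, Real.norm_eq_abs]
        exact mul_le_one₀ (hmean h₁ ω) (abs_nonneg _) (hmean h₂ ω))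
    _ = 1 := by simp

theorem variance_sum_range_le_of_indepFun {Y : ℕ → Ω → ℝ} {m : ℕ}
    (hmeas : ∀ i, Measurable (Y i)) (hY : ∀ i ω, Y i ω ∈ Set.Icc 0 1)
    (hind : ∀ i j, i + m ≤ j → IndepFun (Y i) (Y j) P) (N : ℕ) :
    Var[fun ω => ∑ i ∈ range N, Y i ω; P] ≤ N * (2 * m) := by
  have hL2 : ∀ i, MemLp (Y i) 2 P := fun i =>
    memLp_of_bounded (a := 0) (b := 1) (.of_forall (hY i)) (hmeas i).aestronglyMeasurable 2
  have hcov : ∀ i j, cov[Y i, Y j; P] ≤ if i + m ≤ j ∨ j + m ≤ i then 0 else 1 := by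
    intro i j
    split_ifs with hfar
    · refine le_of_eq (IndepFun.covariance_eq_zero ?_ (hL2 i) (hL2 j))
      exact hfar.elim (hind i j) fun h => (hind j i h).symm
    · exact covariance_le_one (hY i) (hY j)
  have hrow : ∀ i, #{j ∈ range N | ¬(i + m ≤ j ∨ j + m ≤ i)} ≤ 2 * m := by
    intro i
    calc _ ≤ #(Ico (i + 1 - m) (i + m)) := card_le_card fun j hj => by
          simp only [mem_filter, mem_Ico] at hj ⊢
          omega
      _ ≤ 2 * m := by rw [Nat.card_Ico]; omega
  rw [variance_fun_sum' fun i _ => hL2 i]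
  calc ∑ i ∈ range N, ∑ j ∈ range N, cov[Y i, Y j; P]
      ≤ ∑ i ∈ range N, ∑ j ∈ range N, if i + m ≤ j ∨ j + m ≤ i then (0 : ℝ) else 1 :=
        sum_le_sum fun i _ => sum_le_sum fun j _ => hcov i j
    _ ≤ ∑ _i ∈ range N, (2 * m : ℝ) := sum_le_sum fun i _ => by
        rw [sum_ite, sum_const_zero, sum_const, zero_add, nsmul_one]
        exact_mod_cast hrow i
    _ = N * (2 * m) := by simp

theorem integral_abs_sub_le_of_le_of_le_add {L R U : Ω → ℝ} {a : ℝ} (hL : Integrable L P)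
    (hU : Integrable U P) (hLR : ∀ ω, L ω ≤ R ω) (hRU : ∀ ω, R ω ≤ U ω + a) (c : ℝ) :
    ∫ ω, |R ω - c| ∂P ≤ ∫ ω, |U ω - P[U]| ∂P + |P[U] + a - c| + (P[U] + a - P[L]) := by
  have hdev : Integrable (fun ω => |U ω - P[U]|) P := (hU.sub (integrable_const _)).abs
  have hgap : Integrable (fun ω => U ω + a - L ω) P := (hU.add (integrable_const a)).sub hL
  calc ∫ ω, |R ω - c| ∂P
      ≤ ∫ ω, (|U ω - P[U]| + |P[U] + a - c| + (U ω + a - L ω)) ∂P := by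
        refine integral_mono_of_nonneg (.of_forall fun ω => abs_nonneg _)
          ((hdev.add (integrable_const _)).add hgap) (.of_forall fun ω => ?_)
        have h₁ := abs_sub_le (R ω) (U ω + a) c
        have h₂ := abs_sub_le (U ω + a) (P[U] + a) c
        rw [abs_of_nonpos (sub_nonpos.2 (hRU ω))] at h₁
        rw [add_sub_add_right_eq_sub] at h₂
        dsimp only
        linarith [hLR ω]
    _ = _ := by
        rw [integral_add (f := fun ω => |U ω - P[U]| + |P[U] + a - c|) (g := fun ω => U ω + a - L ω)
          (hdev.add (integrable_const _)) hgap, integral_add hdev (integrable_const _),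
          integral_sub (f := fun ω => U ω + a) (hU.add (integrable_const a)) hL,
          integral_add hU (integrable_const a)]
        simp

end Concentration

theorem tendsto_zero_of_forall_eventually_le_add {u c : ℕ → ℝ} {f : ℕ → ℕ → ℝ}
    (hu : ∀ n, 0 ≤ u n) (hc : Tendsto c atTop (nhds 0)) (hf : ∀ m, Tendsto (f m) atTop (nhds 0))
    (hle : ∀ m, ∀ᶠ n in atTop, u n ≤ c m + f m n) : Tendsto u atTop (nhds 0) := by
  refine tendsto_order.2 ⟨fun a ha => .of_forall fun n => ha.trans_le (hu n), fun a ha => ?_⟩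
  obtain ⟨m, hm⟩ := (hc.eventually (gt_mem_nhds (half_pos ha))).exists
  filter_upwards [hle m, (hf m).eventually (gt_mem_nhds (half_pos ha))] with n hn hfn
  linarith

section NoReturnSet

variable {Ω α : Type*} {X : ℕ → Ω → α}

def noReturnSet (X : ℕ → Ω → α) (i m : ℕ) : Set Ω :=
  {ω | NoReturn (X · ω) i m}

theorem antitone_noReturnSet (i : ℕ) : Antitone (noReturnSet X i) :=
  fun _ _ hm ω hω => NoReturn.mono (f := (X · ω)) hω hm

theorem noReturnSet_eq_preimage {G : Type*} [AddCommGroup G] {X : ℕ → Ω → G} (i m : ℕ) :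
    noReturnSet X i m = (fun ω n => X (i + n + 1) ω - X (i + n) ω) ⁻¹'
      noReturnSet (fun j (v : ℕ → G) => ∑ k ∈ range j, v k) 0 m :=
  Set.ext fun ω => noReturn_iff_noReturn_partialSum (f := (X · ω))

theorem measurableSet_noReturnSet {_ : MeasurableSpace Ω} [MeasurableSpace α] [MeasurableEq α]
    {i m : ℕ} (hX : ∀ j ≤ m, Measurable (X (i + j))) : MeasurableSet (noReturnSet X i m) := by
  have hXi : Measurable (X i) := by simpa using hX 0 (Nat.zero_le m)
  simp only [noReturnSet, NoReturn, Set.ofPred_forall]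
  exact .iInter fun j => .iInter fun _ => .iInter fun hj =>
    (measurableSet_eq_fun (hX j hj) hXi).compl

theorem tendsto_measureReal_noReturnSet [MeasurableSpace Ω] [MeasurableSpace α] [MeasurableEq α]
    {P : Measure Ω} [IsFiniteMeasure P] (hXmeas : ∀ n, Measurable (X n)) :
    Tendsto (fun m => P.real (noReturnSet X 0 m)) atTop
      (nhds (P.real {ω | ∀ n, 1 ≤ n → X n ω ≠ X 0 ω})) := by
  have hinter : ⋂ m, noReturnSet X 0 m = {ω | ∀ n, 1 ≤ n → X n ω ≠ X 0 ω} := by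
    ext ω
    simp only [Set.mem_iInter, noReturnSet, NoReturn, Set.mem_ofPred_eq, zero_add]
    exact ⟨fun h n hn => h n n hn le_rfl, fun h _ n hn _ => h n hn⟩
  rw [← hinter]
  exact (ENNReal.tendsto_toReal (measure_ne_top P _)).comp
    (tendsto_measure_iInter_atTop
      (fun m => (measurableSet_noReturnSet fun j _ => hXmeas _).nullMeasurableSet)
      (antitone_noReturnSet 0) ⟨0, measure_ne_top P _⟩)

noncomputable def noReturnCount (X : ℕ → Ω → α) (n k : ℕ) (ω : Ω) : ℝ :=
  ∑ i ∈ range (n + 1), (noReturnSet X i k).indicator 1 ω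

open Classical in
theorem noReturnCount_eq_card (n k : ℕ) (ω : Ω) :
    noReturnCount X n k ω = #{i ∈ range (n + 1) | NoReturn (X · ω) i k} := by
  rw [natCast_card_filter]
  rfl

theorem noReturnCount_mem_Icc (n k : ℕ) (ω : Ω) :
    noReturnCount X n k ω ∈ Set.Icc 0 (n + 1 : ℝ) := by
  classical
  rw [noReturnCount_eq_card]
  exact ⟨Nat.cast_nonneg _, by exact_mod_cast (card_filter_le _ _).trans (card_range _).le⟩

theorem noReturnCount_le_card_range [DecidableEq α] (n : ℕ) (ω : Ω) :
    noReturnCount X n n ω ≤ #((range (n + 1)).image (X · ω)) := by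
  classical
  rw [noReturnCount_eq_card]
  exact_mod_cast card_filter_noReturn_le_card_image_range n

theorem card_range_le_noReturnCount_add [DecidableEq α] (n m : ℕ) (ω : Ω) :
    #((range (n + 1)).image (X · ω)) ≤ noReturnCount X n m ω + m := by
  classical
  rw [noReturnCount_eq_card]
  exact_mod_cast card_image_range_le_card_filter_noReturn_add n m

theorem integrable_noReturnCount [MeasurableSpace Ω] [MeasurableSpace α] [MeasurableEq α]
    {P : Measure Ω} [IsFiniteMeasure P] (hXmeas : ∀ n, Measurable (X n)) (n k : ℕ) :
    Integrable (noReturnCount X n k) P :=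
  integrable_finsetSum _ fun _ _ =>
    (integrable_const 1).indicator (measurableSet_noReturnSet fun _ _ => hXmeas _)

end NoReturnSet

section RandomWalk

variable {Ω G : Type*} [MeasurableSpace Ω] [AddCommGroup G] [MeasurableSpace G]
  [MeasurableSingletonClass G] [Countable G] {P : Measure Ω} {μ : Measure G} {X : ℕ → Ω → G}

theorem map_increments_shift_eq_infinitePi (hXmeas : ∀ n, Measurable (X n))
    (hinc : iIndepFun (fun n ω => X (n + 1) ω - X n ω) P)
    (hstep : ∀ n, P.map (fun ω => X (n + 1) ω - X n ω) = μ) (i : ℕ) :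
    P.map (fun ω n => X (i + n + 1) ω - X (i + n) ω) = Measure.infinitePi fun _ => μ := by
  have hmeas : Measurable fun ω n => X (i + n + 1) ω - X (i + n) ω :=
    measurable_pi_lambda _ fun n => (hXmeas _).sub (hXmeas _)
  rw [(hinc.precomp (add_right_injective i)).map_fun_eq_infinitePi_map₀ hmeas.aemeasurable]
  simp only [hstep]

theorem measure_noReturnSet_eq (hXmeas : ∀ n, Measurable (X n))
    (hinc : iIndepFun (fun n ω => X (n + 1) ω - X n ω) P)
    (hstep : ∀ n, P.map (fun ω => X (n + 1) ω - X n ω) = μ) (i m : ℕ) :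
    P (noReturnSet X i m) = P (noReturnSet X 0 m) := by
  have hB : MeasurableSet (noReturnSet (fun j (v : ℕ → G) => ∑ k ∈ range j, v k) 0 m) :=
    measurableSet_noReturnSet fun j _ => Finset.measurable_sum _ fun k _ => measurable_pi_apply k
  have hmeas : ∀ i, Measurable fun ω n => X (i + n + 1) ω - X (i + n) ω := fun i =>
    measurable_pi_lambda _ fun n => (hXmeas _).sub (hXmeas _)
  rw [noReturnSet_eq_preimage i m, noReturnSet_eq_preimage (X := X) 0 m,
    ← Measure.map_apply (hmeas i) hB, ← Measure.map_apply (hmeas 0) hB, map_increments_shift_eq_infinitePi hXmeas hinc hstep,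
    map_increments_shift_eq_infinitePi hXmeas hinc hstep]

/-- Returns within `m` steps after time `i` are decided by the increments in the window
`[i, i + m)`, which are disjoint for times at distance `m`. -/
theorem indepFun_indicator_noReturnSet (hXmeas : ∀ n, Measurable (X n))
    (hinc : iIndepFun (fun n ω => X (n + 1) ω - X n ω) P) {i j m : ℕ} (hij : i + m ≤ j) :
    IndepFun ((noReturnSet X i m).indicator (1 : Ω → ℝ))
      ((noReturnSet X j m).indicator (1 : Ω → ℝ)) P := by
  let window : ℕ → MeasurableSpace Ω := fun i =>
    ⨆ k ∈ Set.Ico i (i + m), MeasurableSpace.comap (fun ω => X (k + 1) ω - X k ω) ‹MeasurableSpace G›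
  have hwindow : ∀ i, MeasurableSet[window i] (noReturnSet X i m) := by
    intro i
    rw [noReturnSet_eq_preimage]
    refine measurableSet_noReturnSet
      (X := fun j ω => ∑ k ∈ range j, (X (i + k + 1) ω - X (i + k) ω))
      fun _ _ => Finset.measurable_sum _ fun k hk => Measurable.of_comap_le ?_
    exact le_iSup₂ (f := fun k (_ : k ∈ Set.Ico i (i + m)) =>
      MeasurableSpace.comap (fun ω => X (k + 1) ω - X k ω) ‹MeasurableSpace G›) (i + k)
      (by simp only [Set.mem_Ico, mem_range] at hk ⊢; omega)
  have hdisj : Disjoint (Set.Ico i (i + m)) (Set.Ico j (j + m)) :=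
    Set.disjoint_left.2 fun k hk hk' => by simp only [Set.mem_Ico] at hk hk'; omega
  rw [IndepFun_iff_Indep]
  refine indep_of_indep_of_le_right (indep_of_indep_of_le_left
    (indep_iSup_of_disjoint (fun k => ((hXmeas _).sub (hXmeas _)).comap_le) hinc.iIndep hdisj)
    ?_) ?_
  · exact (measurable_const.indicator (hwindow i)).comap_le
  · exact (measurable_const.indicator (hwindow j)).comap_le

theorem integral_noReturnCount [IsProbabilityMeasure P] (hXmeas : ∀ n, Measurable (X n))
    (hinc : iIndepFun (fun n ω => X (n + 1) ω - X n ω) P)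
    (hstep : ∀ n, P.map (fun ω => X (n + 1) ω - X n ω) = μ) (n k : ℕ) :
    P[noReturnCount X n k] = (n + 1) * P.real (noReturnSet X 0 k) := by
  have hmeas : ∀ i, MeasurableSet (noReturnSet X i k) := fun _ =>
    measurableSet_noReturnSet fun _ _ => hXmeas _
  simp only [noReturnCount]
  rw [integral_finsetSum _ fun i _ => (integrable_const 1).indicator (hmeas i)]
  simp_rw [integral_indicator_one (hmeas _), measureReal_def,
    measure_noReturnSet_eq hXmeas hinc hstep _ k]
  simp

theorem variance_noReturnCount_le [IsProbabilityMeasure P] (hXmeas : ∀ n, Measurable (X n))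
    (hinc : iIndepFun (fun n ω => X (n + 1) ω - X n ω) P) (n m : ℕ) :
    Var[noReturnCount X n m; P] ≤ (n + 1) * (2 * m) := by
  have := variance_sum_range_le_of_indepFun (P := P) (Y := fun i => (noReturnSet X i m).indicator 1)
    (fun i => measurable_const.indicator (measurableSet_noReturnSet fun _ _ => hXmeas _))
    (fun i ω => ⟨Set.indicator_nonneg (fun _ _ => zero_le_one) ω,
      Set.indicator_le_self' (fun _ _ => zero_le_one) ω⟩)
    (fun i j hij => indepFun_indicator_noReturnSet hXmeas hinc hij) (n + 1)
  exact_mod_cast this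

theorem integral_abs_card_range_sub_le [IsProbabilityMeasure P] [DecidableEq G]
    (hXmeas : ∀ n, Measurable (X n))
    (hinc : iIndepFun (fun n ω => X (n + 1) ω - X n ω) P)
    (hstep : ∀ n, P.map (fun ω => X (n + 1) ω - X n ω) = μ) {γ : ℝ} {m n : ℕ} (hmn : m ≤ n)
    (hγ : γ ≤ P.real (noReturnSet X 0 n)) :
    ∫ ω, |(#((range (n + 1)).image (X · ω)) : ℝ) - n * γ| ∂P
      ≤ √((n + 1) * (2 * m)) + 2 * m + 1 + (2 * n + 1) * (P.real (noReturnSet X 0 m) - γ) := by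
  have hconc : ∫ ω, |noReturnCount X n m ω - P[noReturnCount X n m]| ∂P
      ≤ √((n + 1) * (2 * m)) :=
    (integral_abs_sub_integral_le_sqrt_variance (memLp_of_bounded
      (.of_forall (noReturnCount_mem_Icc n m)) (integrable_noReturnCount (P := P) hXmeas n m).1
      2)).trans (Real.sqrt_le_sqrt (variance_noReturnCount_le hXmeas hinc n m))
  have key := integral_abs_sub_le_of_le_of_le_add (integrable_noReturnCount (P := P) hXmeas n n)
    (integrable_noReturnCount hXmeas n m) (noReturnCount_le_card_range n)
    (card_range_le_noReturnCount_add n m) (n * γ)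
  have hqmn : P.real (noReturnSet X 0 n) ≤ P.real (noReturnSet X 0 m) :=
    measureReal_mono (antitone_noReturnSet 0 hmn)
  have hqm1 : P.real (noReturnSet X 0 m) ≤ 1 := measureReal_le_one
  have hqm0 : 0 ≤ P.real (noReturnSet X 0 m) := measureReal_nonneg
  have hgap : 0 ≤ ((n : ℝ) + 1) * (P.real (noReturnSet X 0 n) - γ) :=
    mul_nonneg (by positivity) (sub_nonneg.2 hγ)
  have hgap' : 0 ≤ (n : ℝ) * (P.real (noReturnSet X 0 m) - γ) :=
    mul_nonneg (by positivity) (sub_nonneg.2 (hγ.trans hqmn))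
  rw [integral_noReturnCount hXmeas hinc hstep] at hconc key
  rw [integral_noReturnCount hXmeas hinc hstep, abs_of_nonneg (by linarith)] at key
  linarith

theorem integral_abs_card_range_div_sub_le [IsProbabilityMeasure P] [DecidableEq G]
    (hXmeas : ∀ n, Measurable (X n))
    (hinc : iIndepFun (fun n ω => X (n + 1) ω - X n ω) P)
    (hstep : ∀ n, P.map (fun ω => X (n + 1) ω - X n ω) = μ) {γ : ℝ} {m n : ℕ} (hmn : m ≤ n)
    (hn : 0 < n) (hγ : γ ≤ P.real (noReturnSet X 0 n)) :
    ∫ ω, |(#((range (n + 1)).image (X · ω)) : ℝ) / n - γ| ∂P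
      ≤ 3 * (P.real (noReturnSet X 0 m) - γ) + (√(4 * m / n) + (2 * m + 1) / n) := by
  set δ := P.real (noReturnSet X 0 m) - γ
  have hn' : (0 : ℝ) < n := Nat.cast_pos.2 hn
  have hδ : 0 ≤ δ := sub_nonneg.2 (hγ.trans (measureReal_mono (antitone_noReturnSet 0 hmn)))
  have hsqrt : √((n + 1) * (2 * m)) / n ≤ √(4 * m / n) := by
    rw [div_le_iff₀ hn']
    calc √((n + 1) * (2 * m)) ≤ √(4 * m / n * n ^ 2) := Real.sqrt_le_sqrt (by
          rw [div_mul_eq_mul_div, sq, ← mul_assoc, mul_div_assoc, mul_div_cancel_right₀ _ hn'.ne']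
          nlinarith [(Nat.cast_le (α := ℝ)).2 hmn, (Nat.one_le_cast (α := ℝ)).2 hn])
      _ = √(4 * m / n) * n := by rw [Real.sqrt_mul' _ (sq_nonneg _), Real.sqrt_sq hn'.le]
  have hdrift : (2 * n + 1) * δ / n ≤ 3 * δ := by
    rw [div_le_iff₀ hn']
    nlinarith [(Nat.one_le_cast (α := ℝ)).2 hn]
  calc ∫ ω, |(#((range (n + 1)).image (X · ω)) : ℝ) / n - γ| ∂P
      = (∫ ω, |(#((range (n + 1)).image (X · ω)) : ℝ) - n * γ| ∂P) / n := by
        rw [← integral_div]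
        congr with ω
        rw [← abs_of_pos hn', ← abs_div, abs_of_pos hn', sub_div, mul_div_cancel_left₀ _ hn'.ne']
    _ ≤ (√((n + 1) * (2 * m)) + 2 * m + 1 + (2 * n + 1) * δ) / n :=
        div_le_div_of_nonneg_right (integral_abs_card_range_sub_le hXmeas hinc hstep hmn hγ) hn'.le
    _ = √((n + 1) * (2 * m)) / n + (2 * m + 1) / n + (2 * n + 1) * δ / n := by ring
    _ ≤ _ := by linarith

end RandomWalk

theorem range_over_n_tendsto_escape_probability_L1_general
    (d : ℕ) {Ω : Type} [MeasurableSpace Ω] (P : Measure Ω) [IsProbabilityMeasure P]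
    (μ : Measure (Fin d → ℤ))
    (X : ℕ → Ω → (Fin d → ℤ))
    (hXmeas : ∀ n, Measurable (X n))
    (hinc : iIndepFun
      (fun n ω => X (n + 1) ω - X n ω) P)
    (hstep : ∀ n, P.map (fun ω => X (n + 1) ω - X n ω) = μ)
    (γ : ℝ)
    (hγ : γ = (P {ω | ∀ n, 1 ≤ n → X n ω ≠ X 0 ω}).toReal)
    (R : ℕ → Ω → ℕ)
    (hR : ∀ n ω, R n ω = ((Finset.range (n + 1)).image (fun i => X i ω)).card) :
    Tendsto (fun n => ∫ ω, |(R n ω : ℝ) / (n : ℝ) - γ| ∂P) atTop (nhds 0) := by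
  have hq : Tendsto (fun m => P.real (noReturnSet X 0 m)) atTop (nhds γ) := by
    rw [hγ, ← measureReal_def]
    exact tendsto_measureReal_noReturnSet hXmeas
  have hγq : ∀ k, γ ≤ P.real (noReturnSet X 0 k) := fun k =>
    Antitone.le_of_tendsto (fun _ _ h => measureReal_mono (antitone_noReturnSet 0 h)) hq k
  simp only [hR]
  refine tendsto_zero_of_forall_eventually_le_add (f := fun m n => √(4 * m / n) + (2 * m + 1) / n)
    (fun n => integral_nonneg fun ω => abs_nonneg _)
    (by simpa using (hq.sub_const γ).const_mul 3) (fun m => ?_) fun m => ?_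
  · simpa using ((tendsto_const_div_atTop_nhds_zero_nat (4 * m : ℝ)).sqrt).add
      (tendsto_const_div_atTop_nhds_zero_nat (2 * m + 1 : ℝ))
  · filter_upwards [eventually_ge_atTop m, eventually_gt_atTop 0] with n hmn hn
    exact integral_abs_card_range_div_sub_le hXmeas hinc hstep hmn hn (hγq n)

/-- Kesten–Spitzer–Whitman range theorem: for a transient random walk with escape
probability `γ > 0`, the range satisfies `R n / n → γ` in `L¹`. -/
theorem range_over_n_tendsto_escape_probability_L1
    (d : ℕ) {Ω : Type} [MeasurableSpace Ω] (P : Measure Ω) [IsProbabilityMeasure P]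
    (μ : Measure (Fin d → ℤ)) [IsProbabilityMeasure μ]
    (X : ℕ → Ω → (Fin d → ℤ))
    (hX0 : ∀ ω, X 0 ω = 0)
    (hXmeas : ∀ n, Measurable (X n))
    (hinc : iIndepFun
      (fun n ω => X (n + 1) ω - X n ω) P)
    (hstep : ∀ n, P.map (fun ω => X (n + 1) ω - X n ω) = μ)
    (γ : ℝ)
    (hγ : γ = (P {ω | ∀ n, 1 ≤ n → X n ω ≠ X 0 ω}).toReal)
    (hγpos : 0 < γ)  -- transience
    (R : ℕ → Ω → ℕ)
    (hR : ∀ n ω, R n ω = ((Finset.range (n + 1)).image (fun i => X i ω)).card) :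
    Tendsto (fun n => ∫ ω, |(R n ω : ℝ) / (n : ℝ) - γ| ∂P) atTop (nhds 0) :=
  range_over_n_tendsto_escape_probability_L1_general d P μ X hXmeas hinc hstep γ hγ R hR
end

section
/- Suppose that for all large t, the probability ε_t that an active tracer visits the origin during [0,t] satisfies ε_t ≥ ε > 0, and that the probability an active tracer visits the origin during [0,T] is at most δ²T/t for fixed T (where the coupling parameter m = δ²/t). Then P[ξ_s(0) ≠ 0 for some s ≥ T] ≥ ε/2 for every T, and hence P[origin is visited at arbitrarily large times] ≥ ε/2 > 0. -/
open MeasureTheory Filter Topology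
open scoped ENNReal

/-!
An active tracer seen at the origin during `[0, t]` was seen there either before a fixed time `T`,
which has probability at most `δ²T/t → 0`, or after `T`, which has probability at most
`2 P[ξ_s(0) ≠ 0 for some s ≥ T]`. Letting `t → ∞` gives `ε ≤ 2 P[ξ_s(0) ≠ 0 for some s ≥ T]`.
These events decrease in `T`, so continuity from above passes the bound to their intersection.
-/

theorem ENNReal.le_of_eventually_le_add_of_tendsto_zero {α : Type*} {l : Filter α} [l.NeBot]
    {a b : ℝ≥0∞} {f : α → ℝ≥0∞} (hf : Tendsto f l (𝓝 0)) (h : ∀ᶠ x in l, a ≤ f x + b) :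
    a ≤ b := by
  have hfb : Tendsto (fun x => f x + b) l (𝓝 b) := by
    simpa using hf.add (tendsto_const_nhds (x := b))
  exact ge_of_tendsto hfb h

theorem ENNReal.tendsto_ofReal_const_div_atTop (a : ℝ) :
    Tendsto (fun t : ℝ => ENNReal.ofReal (a / t)) atTop (𝓝 0) := by
  rw [← ENNReal.ofReal_zero]
  exact (ENNReal.continuous_ofReal.tendsto 0).comp
    ((tendsto_const_nhds (x := a)).div_atTop tendsto_id)

theorem le_of_subset_union_of_tendsto_measure_zero {Ω α : Type*} [MeasurableSpace Ω]
    (P : Measure Ω) {l : Filter α} [l.NeBot] {B C D : α → Set Ω} {b c : ℝ≥0∞}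
    (hsub : ∀ x, B x ⊆ C x ∪ D x)
    (hB : ∀ᶠ x in l, c ≤ P (B x)) (hC : Tendsto (fun x => P (C x)) l (𝓝 0))
    (hD : ∀ x, P (D x) ≤ b) : c ≤ b := by
  refine ENNReal.le_of_eventually_le_add_of_tendsto_zero hC (hB.mono fun x hx => ?_)
  calc c ≤ P (B x) := hx
    _ ≤ P (C x) + P (D x) := (measure_mono (hsub x)).trans (measure_union_le _ _)
    _ ≤ P (C x) + b := by gcongr; exact hD x

def nonzeroAfter {Ω M : Type*} [Zero M] (ξ : ℝ → Ω → M) (T : ℝ) : Set Ω :=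
  {ω | ∃ s, T ≤ s ∧ ξ s ω ≠ 0}

theorem antitone_nonzeroAfter {Ω M : Type*} [Zero M] (ξ : ℝ → Ω → M) :
    Antitone (nonzeroAfter ξ) :=
  fun _ _ hT _ ⟨s, hs, hne⟩ => ⟨s, hT.trans hs, hne⟩

theorem ENNReal.ofReal_half_le_of_le_two_mul {ε : ℝ} {a : ℝ≥0∞}
    (h : ENNReal.ofReal ε ≤ 2 * a) : ENNReal.ofReal (ε / 2) ≤ a := by
  rw [ENNReal.ofReal_div_of_pos two_pos, ENNReal.ofReal_ofNat]
  exact ENNReal.div_le_of_le_mul' h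

theorem uniform_tracer_bound_implies_recurrence_general
    {Ω : Type} [MeasurableSpace Ω] (P : Measure Ω) [IsProbabilityMeasure P]
    (ξ : ℝ → Ω → ℤ)                 -- configuration at the origin
    (B : ℝ → Set Ω)                 -- an active tracer visits the origin during [0,t]
    (Bm Bp : ℝ → ℝ → Set Ω)         -- visits during [0,T], resp. [T,t]
    (ε δ : ℝ)
    (hB : ∀ᶠ t in atTop, ENNReal.ofReal ε ≤ P (B t))
    (hsplit : ∀ T t, B t ⊆ Bm T t ∪ Bp T t)
    (hBm : ∀ T, 0 < T → ∀ t, 0 < t → P (Bm T t) ≤ ENNReal.ofReal (δ ^ 2 * T / t))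
    -- the presence of an active tracer forces ξ or ξᵐ to be nonzero, and the two
    -- systems have the same law
    (hBp : ∀ T t, P (Bp T t) ≤ 2 * P {ω | ∃ s, T ≤ s ∧ ξ s ω ≠ 0})
    (hmeas : ∀ T : ℝ, MeasurableSet {ω | ∃ s, T ≤ s ∧ ξ s ω ≠ 0}) :
    (∀ T : ℝ, ENNReal.ofReal (ε / 2) ≤ P {ω | ∃ s, T ≤ s ∧ ξ s ω ≠ 0}) ∧
    ENNReal.ofReal (ε / 2) ≤ P {ω | ∀ T : ℝ, ∃ s, T ≤ s ∧ ξ s ω ≠ 0} := by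
  have hBm_tendsto (T : ℝ) (hT : 0 < T) : Tendsto (fun t => P (Bm T t)) atTop (𝓝 0) :=
    tendsto_of_tendsto_of_tendsto_of_le_of_le' tendsto_const_nhds
      (ENNReal.tendsto_ofReal_const_div_atTop (δ ^ 2 * T)) (.of_forall fun _ => zero_le)
      ((eventually_gt_atTop 0).mono (hBm T hT))
  have hpos (T : ℝ) (hT : 0 < T) : ENNReal.ofReal (ε / 2) ≤ P (nonzeroAfter ξ T) :=
    ENNReal.ofReal_half_le_of_le_two_mul <| le_of_subset_union_of_tendsto_measure_zero P
      (hsplit T) hB (hBm_tendsto T hT) (hBp T)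
  have hall (T : ℝ) : ENNReal.ofReal (ε / 2) ≤ P (nonzeroAfter ξ T) :=
    (hpos _ (lt_max_of_lt_right one_pos)).trans
      (measure_mono (antitone_nonzeroAfter ξ (le_max_left T 1)))
  refine ⟨hall, ?_⟩
  have hinter : {ω | ∀ T : ℝ, ∃ s, T ≤ s ∧ ξ s ω ≠ 0} = ⋂ T, nonzeroAfter ξ T := by
    ext; simp [nonzeroAfter]
  rw [hinter, (antitone_nonzeroAfter ξ).measure_iInter (fun T => (hmeas T).nullMeasurableSet)
    ⟨0, measure_ne_top P _⟩]
  exact le_iInf hall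

/-- If the probability that an active tracer visits the origin during `[0,t]` is
uniformly bounded below by `ε`, while visits during `[0,T]` have probability at most
`δ²T/t`, then `P[ξ_s(0) ≠ 0 for some s ≥ T] ≥ ε/2` for every `T`, hence the origin is
visited at arbitrarily large times with probability at least `ε/2`. -/
theorem uniform_tracer_bound_implies_recurrence
    {Ω : Type} [MeasurableSpace Ω] (P : Measure Ω) [IsProbabilityMeasure P]
    (ξ : ℝ → Ω → ℤ)                 -- configuration at the origin
    (B : ℝ → Set Ω)                 -- an active tracer visits the origin during [0,t]
    (Bm Bp : ℝ → ℝ → Set Ω)         -- visits during [0,T], resp. [T,t]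
    (ε δ : ℝ) (hε : 0 < ε)
    (hB : ∀ᶠ t in atTop, ENNReal.ofReal ε ≤ P (B t))
    (hsplit : ∀ T t, B t ⊆ Bm T t ∪ Bp T t)
    (hBm : ∀ T, 0 < T → ∀ t, 0 < t → P (Bm T t) ≤ ENNReal.ofReal (δ ^ 2 * T / t))
    -- the presence of an active tracer forces ξ or ξᵐ to be nonzero, and the two
    -- systems have the same law
    (hBp : ∀ T t, P (Bp T t) ≤ 2 * P {ω | ∃ s, T ≤ s ∧ ξ s ω ≠ 0})
    (hmeas : ∀ T : ℝ, MeasurableSet {ω | ∃ s, T ≤ s ∧ ξ s ω ≠ 0}) :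
    (∀ T : ℝ, ENNReal.ofReal (ε / 2) ≤ P {ω | ∃ s, T ≤ s ∧ ξ s ω ≠ 0}) ∧
    ENNReal.ofReal (ε / 2) ≤ P {ω | ∀ T : ℝ, ∃ s, T ≤ s ∧ ξ s ω ≠ 0} :=
  uniform_tracer_bound_implies_recurrence_general P ξ B Bm Bp ε δ hB hsplit hBm hBp hmeas
end

section
/- Let G be a graph, p a reflective transition kernel on G (invariant under a group Γ_p of automorphisms making G reflective), Z = (Z_n)_{n≥0} a discrete-time random walk with Z_0 = y and kernel p, and ℓ = (ℓ_n)_{n≥1} ∈ {1,2}^ℕ a fixed sequence. Then there exist processes (W^y_n) and (W^z_n) with W^y_0 = y, W^z_0 = z, such that: (1) d(W^y_n, W^z_n) = d(Z_n, z) for all n; and (2) conditionally on (W^y_i, W^z_i)_{i≤n}, if ℓ_{n+1} = 1 then W^z_{n+1} = W^z_n and W^y_{n+1} is distributed as p(W^y_n, ·), while if ℓ_{n+1} = 2 then W^y_{n+1} = W^y_n and W^z_{n+1} is distributed as p(W^z_n, ·). -/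
open MeasureTheory
open scoped ENNReal

/-! Let `σ_n ∈ Γ` be a "frame": an automorphism carrying `Z_n` to the walk that moves next and
`z` to the walk that stands still. While the same walk keeps moving it simply follows
`σ_n (Z_{n+1})`; when `ℓ` switches, the frame is composed with a reflection exchanging the two
current positions. Automorphisms preserve distances, giving `d(W^y_n, W^z_n) = d(Z_n, z)`, and
`p`-invariance turns each step of `Z` into a `p`-step of the moving walk. Finally the frames, and
hence `Z`, can be read off the history of `(W^y, W^z)`, so conditioning on that history is
conditioning on the history of `Z`. -/

namespace SimpleGraph

variable {V W : Type*} {G : SimpleGraph V} {G' : SimpleGraph W}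

lemma Hom.edist_le (f : G →g G') (u v : V) : G'.edist (f u) (f v) ≤ G.edist u v := by
  by_cases hr : G.Reachable u v
  · obtain ⟨q, hq⟩ := hr.exists_walk_length_eq_edist
    calc G'.edist (f u) (f v) ≤ (q.map f).length := SimpleGraph.edist_le _
      _ = G.edist u v := by rw [Walk.length_map, hq]
  · rw [edist_eq_top_of_not_reachable hr]
    exact le_top

lemma Iso.edist_eq (f : G ≃g G') (u v : V) : G'.edist (f u) (f v) = G.edist u v :=
  le_antisymm (f.toHom.edist_le u v) (by simpa using f.symm.toHom.edist_le (f u) (f v))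

lemma Iso.dist_eq (f : G ≃g G') (u v : V) : G'.dist (f u) (f v) = G.dist u v :=
  congrArg ENat.toNat (f.edist_eq u v)

end SimpleGraph

namespace EntangledWalks

variable {V : Type*} (ℓ : ℕ → Bool) (sw : V → V → Equiv.Perm V) (z : V)

/-- The walk moving at step `n + 1` is the first one iff `ℓ (n + 1)`; `frame f n` carries `f n`
to its position and `z` to the position of the other walk. -/
def frame (f : ℕ → V) : ℕ → Equiv.Perm V
  | 0 => if ℓ 1 then 1 else sw (f 0) z
  | n + 1 =>
    if ℓ (n + 2) = ℓ (n + 1) then frame f n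
    else sw (frame f n (f (n + 1))) (frame f n z) * frame f n

def positions (f : ℕ → V) (n : ℕ) : V × V :=
  if ℓ (n + 1) then (frame ℓ sw z f n (f n), frame ℓ sw z f n z)
  else (frame ℓ sw z f n z, frame ℓ sw z f n (f n))

variable {ℓ sw z}

lemma frame_mem {Γ : Subgroup (Equiv.Perm V)} (hswΓ : ∀ a b, sw a b ∈ Γ) (f : ℕ → V) :
    ∀ n, frame ℓ sw z f n ∈ Γ
  | 0 => by unfold frame; split <;> simp [hswΓ]
  | n + 1 => by
    unfold frame
    split
    · exact frame_mem hswΓ f n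
    · exact mul_mem (hswΓ _ _) (frame_mem hswΓ f n)

lemma frame_congr {f g : ℕ → V} : ∀ {n}, (∀ i ≤ n, f i = g i) →
    frame ℓ sw z f n = frame ℓ sw z g n
  | 0, h => by simp only [frame, h 0 le_rfl]
  | n + 1, h => by
    simp only [frame, frame_congr fun i hi => h i (Nat.le_succ_of_le hi), h (n + 1) le_rfl]

lemma positions_congr {f g : ℕ → V} {n : ℕ} (h : ∀ i ≤ n, f i = g i) :
    positions ℓ sw z f n = positions ℓ sw z g n := by
  simp only [positions, frame_congr h, h n le_rfl]

lemma dist_positions {G : SimpleGraph V} {Γ : Subgroup (Equiv.Perm V)}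
    (hAut : ∀ π ∈ Γ, ∀ u v : V, G.Adj (π u) (π v) ↔ G.Adj u v) (hswΓ : ∀ a b, sw a b ∈ Γ)
    (f : ℕ → V) (n : ℕ) :
    G.dist (positions ℓ sw z f n).1 (positions ℓ sw z f n).2 = G.dist (f n) z := by
  let σ : G ≃g G := ⟨frame ℓ sw z f n, hAut _ (frame_mem hswΓ f n) _ _⟩
  have hσ := σ.dist_eq (f n) z
  unfold positions
  split
  · exact hσ
  · rw [G.dist_comm]
    exact hσ

variable (hsw : ∀ a b, sw a b a = b ∧ sw a b b = a)
include hsw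

lemma positions_zero (f : ℕ → V) : positions ℓ sw z f 0 = (f 0, z) := by
  by_cases h : ℓ 1 <;> simp [positions, frame, h, hsw]

lemma positions_succ (f : ℕ → V) (n : ℕ) :
    positions ℓ sw z f (n + 1) =
      if ℓ (n + 1) then (frame ℓ sw z f n (f (n + 1)), (positions ℓ sw z f n).2)
      else ((positions ℓ sw z f n).1, frame ℓ sw z f n (f (n + 1))) := by
  by_cases h₁ : ℓ (n + 1) <;> by_cases h₂ : ℓ (n + 2) <;>
    simp [positions, frame, h₁, h₂, Equiv.Perm.mul_apply, hsw]

lemma eq_of_positions_eq {f g : ℕ → V} :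
    ∀ {n}, (∀ i ≤ n, positions ℓ sw z f i = positions ℓ sw z g i) → ∀ i ≤ n, f i = g i
  | 0, h, i, hi => by
    obtain rfl := Nat.le_zero.mp hi
    simpa [positions_zero hsw] using h 0 le_rfl
  | n + 1, h, i, hi => by
    have ih := eq_of_positions_eq fun i hi => h i (Nat.le_succ_of_le hi)
    rcases Nat.le_succ_iff.mp hi with hi | rfl
    · exact ih i hi
    have hstep := h (n + 1) le_rfl
    rw [positions_succ hsw, positions_succ hsw, frame_congr ih] at hstep
    apply (frame ℓ sw z g n).injective
    by_cases hℓ : ℓ (n + 1) <;> simp only [hℓ, if_true, if_false, Bool.false_eq_true] at hstep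
    · exact congrArg Prod.fst hstep
    · exact congrArg Prod.snd hstep

lemma positions_eq_iff {f g : ℕ → V} {n : ℕ} :
    (∀ i ≤ n, positions ℓ sw z f i = positions ℓ sw z g i) ↔ ∀ i ≤ n, f i = g i :=
  ⟨eq_of_positions_eq hsw, fun h _ hi => positions_congr fun j hj => h j (hj.trans hi)⟩

lemma measure_positions_step {Ω : Type*} [MeasurableSpace Ω] {P : Measure Ω}
    {p : V → V → ℝ≥0∞} {Γ : Subgroup (Equiv.Perm V)}
    (hp : ∀ π ∈ Γ, ∀ a b, p (π a) (π b) = p a b) (hswΓ : ∀ a b, sw a b ∈ Γ)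
    {Z : ℕ → Ω → V}
    (hZwalk : ∀ n (f : ℕ → V) (w : V),
      P {ω | (∀ i ≤ n, Z i ω = f i) ∧ Z (n + 1) ω = w} = p (f n) w * P {ω | ∀ i ≤ n, Z i ω = f i})
    (n : ℕ) (q : ℕ → V × V) (w : V) :
    P {ω | (∀ i ≤ n, positions ℓ sw z (Z · ω) i = q i) ∧
        frame ℓ sw z (Z · ω) n (Z (n + 1) ω) = w}
      = p (if ℓ (n + 1) then (q n).1 else (q n).2) w *
        P {ω | ∀ i ≤ n, positions ℓ sw z (Z · ω) i = q i} := by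
  rcases Set.eq_empty_or_nonempty {ω | ∀ i ≤ n, positions ℓ sw z (Z · ω) i = q i}
    with hE | ⟨ω₀, h₀⟩
  · have hE0 : P {ω | ∀ i ≤ n, positions ℓ sw z (Z · ω) i = q i} = 0 := by
      rw [hE, measure_empty]
    rw [hE0, mul_zero]
    exact measure_mono_null (fun ω hω => hω.1) hE0
  set σ := frame ℓ sw z (Z · ω₀) n
  have hcyl : ∀ ω, (∀ i ≤ n, positions ℓ sw z (Z · ω) i = q i) ↔ ∀ i ≤ n, Z i ω = Z i ω₀ :=
    fun ω => (forall₂_congr fun i hi => by rw [← h₀ i hi]).trans (positions_eq_iff hsw)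
  have hstart : σ (Z n ω₀) = if ℓ (n + 1) then (q n).1 else (q n).2 := by
    rw [← h₀ n le_rfl]
    unfold positions
    split <;> rfl
  have hstep : {ω | (∀ i ≤ n, positions ℓ sw z (Z · ω) i = q i) ∧
      frame ℓ sw z (Z · ω) n (Z (n + 1) ω) = w} =
      {ω | (∀ i ≤ n, Z i ω = Z i ω₀) ∧ Z (n + 1) ω = σ⁻¹ w} := by
    ext ω
    simp only [Set.mem_ofPred_eq, hcyl]
    exact and_congr_right fun h => by rw [frame_congr h, Equiv.Perm.eq_inv_iff_eq]
  rw [hstep]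
  simp only [hcyl]
  rw [hZwalk, ← hstart, ← hp σ (frame_mem hswΓ _ n), Equiv.Perm.coe_inv, Equiv.apply_symm_apply]

end EntangledWalks

open EntangledWalks in
theorem entangled_walks_exist_general
    {V : Type} (G : SimpleGraph V)
    (Γ : Subgroup (Equiv.Perm V))
    (hAut : ∀ π ∈ Γ, ∀ u v : V, G.Adj (π u) (π v) ↔ G.Adj u v)
    (hswap : ∀ x y : V, ∃ π ∈ Γ, π x = y ∧ π y = x)
    (p : V → V → ℝ≥0∞)
    (hp : ∀ π ∈ Γ, ∀ x y : V, p (π x) (π y) = p x y)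
    {Ω : Type} [MeasurableSpace Ω] (P : Measure Ω)
    (y z : V)
    (Z : ℕ → Ω → V) (hZ0 : ∀ ω, Z 0 ω = y)
    -- Z is a random walk with kernel p
    (hZwalk : ∀ n (f : ℕ → V) (w : V),
      P {ω | (∀ i ≤ n, Z i ω = f i) ∧ Z (n + 1) ω = w}
        = p (f n) w * P {ω | ∀ i ≤ n, Z i ω = f i})
    (ℓ : ℕ → Bool) :
    ∃ Wy Wz : ℕ → Ω → V,
      (∀ ω, Wy 0 ω = y) ∧ (∀ ω, Wz 0 ω = z) ∧
      (∀ n ω, G.dist (Wy n ω) (Wz n ω) = G.dist (Z n ω) z) ∧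
      (∀ n (fy fz : ℕ → V) (w : V),
        (ℓ (n + 1) = true →
          (∀ ω, Wz (n + 1) ω = Wz n ω) ∧
          P {ω | (∀ i ≤ n, Wy i ω = fy i ∧ Wz i ω = fz i) ∧ Wy (n + 1) ω = w}
            = p (fy n) w * P {ω | ∀ i ≤ n, Wy i ω = fy i ∧ Wz i ω = fz i}) ∧
        (ℓ (n + 1) = false →
          (∀ ω, Wy (n + 1) ω = Wy n ω) ∧
          P {ω | (∀ i ≤ n, Wy i ω = fy i ∧ Wz i ω = fz i) ∧ Wz (n + 1) ω = w}
            = p (fz n) w * P {ω | ∀ i ≤ n, Wy i ω = fy i ∧ Wz i ω = fz i})) := by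
  choose sw hswΓ hsw using hswap
  have hstep := measure_positions_step (ℓ := ℓ) (z := z) hsw hp hswΓ hZwalk
  refine ⟨fun n ω => (positions ℓ sw z (Z · ω) n).1, fun n ω => (positions ℓ sw z (Z · ω) n).2,
    fun ω => by simp [positions_zero hsw, hZ0], fun ω => by simp [positions_zero hsw],
    fun n ω => dist_positions hAut hswΓ _ n, fun n fy fz w => ⟨fun hℓ => ?_, fun hℓ => ?_⟩⟩
  all_goals
    refine ⟨fun ω => by simp [positions_succ hsw, hℓ], ?_⟩
    simpa [positions_succ hsw, hℓ, Prod.ext_iff] using hstep n (fun i => (fy i, fz i)) w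

/-- Construction of the entangled pair of walks on a reflective graph: from a single
`p`-walk `Z` started at `y` and a fixed sequence `ℓ ∈ {1,2}^ℕ` (here encoded by
`Bool`, `true` meaning "the first walk moves"), one obtains processes `W^y, W^z` such
that `d(W^y_n, W^z_n) = d(Z_n, z)` and at each step the walk designated by `ℓ` makes a
`p`-distributed jump while the other stands still. -/
theorem entangled_walks_exist
    {V : Type} (G : SimpleGraph V) (hconn : G.Connected)
    (Γ : Subgroup (Equiv.Perm V))
    (hAut : ∀ π ∈ Γ, ∀ u v : V, G.Adj (π u) (π v) ↔ G.Adj u v)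
    (hswap : ∀ x y : V, ∃ π ∈ Γ, π x = y ∧ π y = x)
    (p : V → V → ℝ≥0∞)
    (hp : ∀ π ∈ Γ, ∀ x y : V, p (π x) (π y) = p x y)
    {Ω : Type} [MeasurableSpace Ω] (P : Measure Ω) [IsProbabilityMeasure P]
    (y z : V)
    (Z : ℕ → Ω → V) (hZ0 : ∀ ω, Z 0 ω = y)
    -- Z is a random walk with kernel p
    (hZwalk : ∀ n (f : ℕ → V) (w : V),
      P {ω | (∀ i ≤ n, Z i ω = f i) ∧ Z (n + 1) ω = w}
        = p (f n) w * P {ω | ∀ i ≤ n, Z i ω = f i})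
    (ℓ : ℕ → Bool) :
    ∃ Wy Wz : ℕ → Ω → V,
      (∀ ω, Wy 0 ω = y) ∧ (∀ ω, Wz 0 ω = z) ∧
      (∀ n ω, G.dist (Wy n ω) (Wz n ω) = G.dist (Z n ω) z) ∧
      (∀ n (fy fz : ℕ → V) (w : V),
        (ℓ (n + 1) = true →
          (∀ ω, Wz (n + 1) ω = Wz n ω) ∧
          P {ω | (∀ i ≤ n, Wy i ω = fy i ∧ Wz i ω = fz i) ∧ Wy (n + 1) ω = w}
            = p (fy n) w * P {ω | ∀ i ≤ n, Wy i ω = fy i ∧ Wz i ω = fz i}) ∧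
        (ℓ (n + 1) = false →
          (∀ ω, Wy (n + 1) ω = Wy n ω) ∧
          P {ω | (∀ i ≤ n, Wy i ω = fy i ∧ Wz i ω = fz i) ∧ Wz (n + 1) ω = w}
            = p (fz n) w * P {ω | ∀ i ≤ n, Wy i ω = fy i ∧ Wz i ω = fz i})) :=
  entangled_walks_exist_general G Γ hAut hswap p hp P y z Z hZ0 hZwalk ℓ
end
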